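/- Let f be an entire function on ℂ such that f(z) ≠ 0 and f''(z) ≠ 0 for all z ∈ ℂ, and assume f is of finite order (i.e., log log M(r,f) = O(log r), where M(r,f) = max_{|z|=r} |f(z)|). Then there exist constants A, B ∈ ℂ with f(z) = exp(Az + B) for all z. -/

import Mathlib

/-!
Write `f = exp ∘ g` with `g` entire. The finite-order bound `‖f‖ ≤ exp (C r^ρ)` is an upper bound
`Re g ≤ C r^ρ`, which Borel–Carathéodory upgrades to `|g| = O(r^ρ)`; the Cauchy estimates then
kill every Taylor coefficient of `g` beyond order `ρ`, so `g = P` is a polynomial. Now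
`f'' = (P'^2 + P'') exp P`, and if `P'` had degree `k ≥ 1` then `P'^2 + P''` would have degree
`2k > 0` and hence a zero. So `P'` is constant and `P` is affine.
-/

open Filter Topology Metric Polynomial

theorem Differentiable.exists_cexp_eq {f : ℂ → ℂ} (hf : Differentiable ℂ f) (h0 : ∀ z, f z ≠ 0) :
    ∃ g : ℂ → ℂ, Differentiable ℂ g ∧ ∀ z, Complex.exp (g z) = f z := by
  obtain ⟨G, hG⟩ :=
    (hf.deriv.div hf h0 : Differentiable ℂ fun z => _root_.deriv f z / f z).isExactOn_univ
  have hG' (z : ℂ) : HasDerivAt G (_root_.deriv f z / f z) z := hG z trivial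
  have hquot (z : ℂ) : HasDerivAt (fun w => f w * Complex.exp (-G w)) 0 z :=
    ((hf z).hasDerivAt.fun_mul (hG' z).fun_neg.cexp).congr_deriv (by field_simp [h0 z]; ring)
  set c := f 0 * Complex.exp (-G 0)
  have hc : c ≠ 0 := mul_ne_zero (h0 0) (Complex.exp_ne_zero _)
  have hconst (z : ℂ) : f z * Complex.exp (-G z) = c :=
    is_const_of_deriv_eq_zero (fun w => (hquot w).differentiableAt) (fun w => (hquot w).deriv) z 0
  have hGd : Differentiable ℂ G := fun z => (hG' z).differentiableAt
  refine ⟨fun z => G z + Complex.log c, hGd.add_const _, fun z => ?_⟩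
  rw [Complex.exp_add, Complex.exp_log hc, ← hconst z, mul_left_comm, ← Complex.exp_add,
    add_neg_cancel, Complex.exp_zero, mul_one]

theorem Complex.exists_norm_le_rpow_of_re_le {g : ℂ → ℂ} {C ρ : ℝ} (hg : Differentiable ℂ g)
    (hC : 0 < C) (hρ : 0 ≤ ρ) (hre : ∀ᶠ r in atTop, ∀ z : ℂ, ‖z‖ ≤ r → (g z).re ≤ C * r ^ ρ) :
    ∃ B, ∀ᶠ R in atTop, ∀ z ∈ sphere (0 : ℂ) R, ‖g z‖ ≤ B * R ^ ρ := by
  refine ⟨2 * C * 2 ^ ρ + 3 * ‖g 0‖, ?_⟩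
  filter_upwards [(tendsto_id.const_mul_atTop two_pos).eventually hre, eventually_ge_atTop 1]
    with R hre hR z hz
  dsimp only [id] at hre
  rw [mem_sphere_zero_iff_norm] at hz
  have hR0 : 0 < R := by linarith
  have hRρ : 1 ≤ R ^ ρ := Real.one_le_rpow hR hρ
  have hBC := Complex.borelCaratheodory (M := C * (2 * R) ^ ρ) (by positivity)
    hg.differentiableOn (fun w hw => hre w (mem_ball_zero_iff.mp hw).le) (by positivity)
    (z := z) (by rw [mem_ball_zero_iff]; linarith)
  rw [hz, Real.mul_rpow zero_le_two hR0.le] at hBC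
  calc ‖g z‖ ≤ 2 * (C * (2 ^ ρ * R ^ ρ)) * R / (2 * R - R) + ‖g 0‖ * (2 * R + R) / (2 * R - R) :=
        hBC
    _ = 2 * C * 2 ^ ρ * R ^ ρ + 3 * ‖g 0‖ := by field_simp; ring
    _ ≤ (2 * C * 2 ^ ρ + 3 * ‖g 0‖) * R ^ ρ := by nlinarith [norm_nonneg (g 0)]

theorem Differentiable.iteratedDeriv_eq_zero_of_norm_le_rpow {F : Type*} [NormedAddCommGroup F]
    [NormedSpace ℂ F] [CompleteSpace F] {f : ℂ → F} {B ρ : ℝ} (hf : Differentiable ℂ f)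
    (hbound : ∀ᶠ R in atTop, ∀ z ∈ sphere (0 : ℂ) R, ‖f z‖ ≤ B * R ^ ρ) {k : ℕ} (hk : ρ < k) :
    iteratedDeriv k f 0 = 0 := by
  have hlim : Tendsto (fun R : ℝ => k.factorial * B * R ^ (-(k - ρ))) atTop (𝓝 0) := by
    simpa using (tendsto_rpow_neg_atTop (sub_pos.mpr hk)).const_mul ((k.factorial : ℝ) * B)
  refine norm_le_zero_iff.mp (ge_of_tendsto hlim ?_)
  filter_upwards [hbound, eventually_gt_atTop 0] with R hR hR0
  calc ‖iteratedDeriv k f 0‖ ≤ k.factorial * (B * R ^ ρ) / R ^ k :=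
        Complex.norm_iteratedDeriv_le_of_forall_mem_sphere_norm_le k hR0 hf.diffContOnCl hR
    _ = k.factorial * B * R ^ (-(k - ρ)) := by
        rw [neg_sub, Real.rpow_sub hR0, Real.rpow_natCast]; ring

theorem Differentiable.exists_polynomial_eq_of_norm_le_rpow {f : ℂ → ℂ} {B ρ : ℝ}
    (hf : Differentiable ℂ f)
    (hbound : ∀ᶠ R in atTop, ∀ z ∈ sphere (0 : ℂ) R, ‖f z‖ ≤ B * R ^ ρ) :
    ∃ P : ℂ[X], ∀ z, f z = P.eval z := by
  set s := Finset.range (⌊ρ⌋₊ + 1)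
  refine ⟨∑ k ∈ s, C ((k.factorial : ℂ)⁻¹ * iteratedDeriv k f 0) * X ^ k, fun z => ?_⟩
  rw [← Complex.taylorSeries_eq_of_entire' 0 z hf, tsum_eq_sum (s := s)]
  · simp [eval_finsetSum]
  · intro k hk
    have hρk : ρ < k := (Nat.lt_floor_add_one ρ).trans_le
      (by exact_mod_cast not_lt.mp (Finset.mem_range.not.mp hk))
    simp [hf.iteratedDeriv_eq_zero_of_norm_le_rpow hbound hρk]

theorem Polynomial.natDegree_eq_zero_of_forall_eval_sq_add_derivative_ne_zero {K : Type*}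
    [Field K] [IsAlgClosed K] {Q : K[X]} (h : ∀ x, (Q ^ 2 + derivative Q).eval x ≠ 0) :
    Q.natDegree = 0 := by
  by_contra hQ
  have hlt : (derivative Q).natDegree < (Q ^ 2).natDegree := by
    rw [natDegree_pow]
    exact (natDegree_derivative_le Q).trans_lt (by omega)
  have hdeg : 0 < (Q ^ 2 + derivative Q).degree := by
    rw [← natDegree_pos_iff_degree_pos, natDegree_add_eq_left_of_natDegree_lt hlt, natDegree_pow]
    omega
  obtain ⟨x, hx⟩ := IsAlgClosed.exists_root _ hdeg.ne'
  exact h x hx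

theorem deriv_deriv_cexp_eval (P : ℂ[X]) (z : ℂ) :
    deriv (deriv fun w => Complex.exp (P.eval w)) z =
      Complex.exp (P.eval z) * (derivative P ^ 2 + derivative (derivative P)).eval z := by
  have hderiv : deriv (fun w => Complex.exp (P.eval w)) =
      fun w => Complex.exp (P.eval w) * (derivative P).eval w :=
    funext fun w => ((P.hasDerivAt w).cexp).deriv
  rw [hderiv, ((P.hasDerivAt z).cexp.fun_mul ((derivative P).hasDerivAt z)).deriv]
  simp only [eval_add, eval_pow]
  ring

/-- Hayman's theorem on `f f''` (finite-order case): if `f` is entire of finite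
order and `f` and `f''` have no zeros then `f(z) = exp (A z + B)`. -/
theorem hayman_ff'' (f : ℂ → ℂ)
    (hf : Differentiable ℂ f)
    (hfinord : ∃ C ρ : ℝ, 0 < C ∧ 0 < ρ ∧ ∀ᶠ r : ℝ in atTop,
      ∀ z : ℂ, ‖z‖ ≤ r → ‖f z‖ ≤ Real.exp (C * r ^ ρ))
    (h0 : ∀ z, f z ≠ 0)
    (h2 : ∀ z, deriv (deriv f) z ≠ 0) :
    ∃ A B : ℂ, ∀ z, f z = Complex.exp (A * z + B) := by
  obtain ⟨g, hg, hgf⟩ := hf.exists_cexp_eq h0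
  obtain rfl : f = fun z => Complex.exp (g z) := funext fun z => (hgf z).symm
  obtain ⟨C, ρ, hC, hρ, hgrowth⟩ := hfinord
  have hre : ∀ᶠ r in atTop, ∀ z : ℂ, ‖z‖ ≤ r → (g z).re ≤ C * r ^ ρ := by
    filter_upwards [hgrowth] with r hr z hz
    simpa [Complex.norm_exp] using hr z hz
  obtain ⟨B, hB⟩ := Complex.exists_norm_le_rpow_of_re_le hg hC hρ.le hre
  obtain ⟨P, hP⟩ := hg.exists_polynomial_eq_of_norm_le_rpow hB
  obtain rfl : g = fun z => P.eval z := funext hP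
  have hP' : (derivative P).natDegree = 0 :=
    natDegree_eq_zero_of_forall_eval_sq_add_derivative_ne_zero fun z hz =>
      h2 z (by rw [deriv_deriv_cexp_eval, hz, mul_zero])
  obtain ⟨a, b, hab⟩ := exists_eq_X_add_C_of_natDegree_le_one
    (by rw [natDegree_derivative] at hP'; omega : P.natDegree ≤ 1)
  exact ⟨a, b, fun z => by simp [hab]⟩
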